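/- arXiv:2302.12996 — 2 statements merged into one kernel-verified Lean document; each statement's English description precedes it below -/
import Mathlib

section
/- Let λ, μ > 0, ω > 0, k_p = ω/√(λ+2μ), k_s = ω/√μ. Then there exists a constant C > 0 depending only on λ and μ such that for all ξ with |ξ| ≤ k_p, setting γ_p = √(k_p² − ξ²), γ_s = √(k_s² − ξ²), ρ = ξ² + γ_p γ_s, one has ω² γ_p / ρ ≤ C ω, ω² γ_s / ρ ≤ C ω, and |ξ ω² − ξ μ ρ|/ρ ≤ C ω. -/
noncomputable def kp (lam mu om : ℝ) : ℝ := om / Real.sqrt (lam + 2 * mu)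
noncomputable def ks (mu om : ℝ) : ℝ := om / Real.sqrt mu

/-!
Both wave numbers are proportional to `ω` and `k_p ≤ k_s`, so `γ_p ≤ γ_s` and
`γ_p γ_s ≥ γ_p² = k_p² − ξ²`, i.e. `ρ ≥ k_p²`. With `γ_p ≤ k_p`, `γ_s ≤ k_s` and `|ξ| ≤ k_p`
the three quotients are bounded by `ω²/k_p`, `ω²k_s/k_p²` and `ω²/k_p + μk_p`, each a constant
multiple of `ω`.
-/

lemma le_add_sqrt_sub_mul_sqrt_sub {x p q : ℝ} (hxp : x ≤ p) (hpq : p ≤ q) :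
    p ≤ x + √(p - x) * √(q - x) := by
  have hsqrt : √(p - x) ≤ √(q - x) := Real.sqrt_le_sqrt (by linarith)
  have hsq : √(p - x) * √(p - x) = p - x := Real.mul_self_sqrt (by linarith)
  nlinarith [mul_le_mul_of_nonneg_left hsqrt (Real.sqrt_nonneg (p - x))]

lemma sqrt_sq_sub_sq_le {a x : ℝ} (ha : 0 ≤ a) : √(a ^ 2 - x ^ 2) ≤ a :=
  (Real.sqrt_le_left ha).mpr (by nlinarith [sq_nonneg x])

lemma abs_mul_sub_mul_mul_div_le {ξ a w m ρ : ℝ} (ha : 0 < a) (hξ : |ξ| ≤ a) (hw : 0 ≤ w)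
    (hm : 0 ≤ m) (hρ : a ^ 2 ≤ ρ) :
    |ξ * w - ξ * m * ρ| / ρ ≤ w / a + m * a := by
  have hρpos : 0 < ρ := (pow_pos ha 2).trans_le hρ
  have hwa : a * w ≤ w / a * ρ := by
    calc a * w = w / a * a ^ 2 := by field_simp
      _ ≤ w / a * ρ := mul_le_mul_of_nonneg_left hρ (by positivity)
  have habs : |ξ * w - ξ * m * ρ| ≤ |ξ| * w + |ξ| * (m * ρ) := by
    calc |ξ * w - ξ * m * ρ| ≤ |ξ * w| + |ξ * (m * ρ)| := by rw [← mul_assoc]; exact abs_sub _ _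
      _ = |ξ| * w + |ξ| * (m * ρ) := by
        rw [abs_mul, abs_mul, abs_of_nonneg hw, abs_of_nonneg (by positivity : 0 ≤ m * ρ)]
  rw [div_le_iff₀ hρpos]
  nlinarith [mul_le_mul_of_nonneg_right hξ hw,
    mul_le_mul_of_nonneg_right hξ (by positivity : 0 ≤ m * ρ)]

section WaveNumbers

variable {lam mu om : ℝ}

lemma kp_pos (hlam : 0 < lam) (hmu : 0 < mu) (hom : 0 < om) : 0 < kp lam mu om :=
  div_pos hom (Real.sqrt_pos.mpr (by linarith))

lemma kp_le_ks (hlam : 0 < lam) (hmu : 0 < mu) (hom : 0 < om) : kp lam mu om ≤ ks mu om :=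
  div_le_div_of_nonneg_left hom.le (Real.sqrt_pos.mpr hmu) (Real.sqrt_le_sqrt (by linarith))

lemma sq_div_kp (lam mu om : ℝ) : om ^ 2 / kp lam mu om = √(lam + 2 * mu) * om := by
  unfold kp
  rcases eq_or_ne om 0 with rfl | hom
  · simp
  rcases eq_or_ne (√(lam + 2 * mu)) 0 with hs | hs
  · simp [hs]
  field_simp

lemma sq_mul_ks_div_kp_sq (hlam : 0 < lam) (hmu : 0 < mu) (hom : 0 < om) :
    om ^ 2 * ks mu om / kp lam mu om ^ 2 = (lam + 2 * mu) / √mu * om := by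
  have hs : √(lam + 2 * mu) ^ 2 = lam + 2 * mu := Real.sq_sqrt (by linarith)
  have ht : 0 < √mu := Real.sqrt_pos.mpr hmu
  have hs0 : 0 < √(lam + 2 * mu) := Real.sqrt_pos.mpr (by linarith)
  unfold kp ks
  field_simp
  rw [hs]

lemma mul_kp (lam mu om : ℝ) : mu * kp lam mu om = mu / √(lam + 2 * mu) * om := by
  unfold kp
  ring

end WaveNumbers

/-- Entry bounds (3.1)–(3.3) for the DtN symbol in the regime `|ξ| ≤ k_p`:
there is `C > 0` depending only on `λ, μ` such that
`ω²γ_p/ρ ≤ Cω`, `ω²γ_s/ρ ≤ Cω` and `|ξω² − ξμρ|/ρ ≤ Cω`. -/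
theorem stmt1 (lam mu : ℝ) (hlam : 0 < lam) (hmu : 0 < mu) :
    ∃ C > (0 : ℝ), ∀ om > (0 : ℝ), ∀ ξ : ℝ, |ξ| ≤ kp lam mu om →
      om ^ 2 * Real.sqrt ((kp lam mu om) ^ 2 - ξ ^ 2) /
          (ξ ^ 2 + Real.sqrt ((kp lam mu om) ^ 2 - ξ ^ 2) *
            Real.sqrt ((ks mu om) ^ 2 - ξ ^ 2)) ≤ C * om ∧
      om ^ 2 * Real.sqrt ((ks mu om) ^ 2 - ξ ^ 2) /
          (ξ ^ 2 + Real.sqrt ((kp lam mu om) ^ 2 - ξ ^ 2) *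
            Real.sqrt ((ks mu om) ^ 2 - ξ ^ 2)) ≤ C * om ∧
      |ξ * om ^ 2 - ξ * mu * (ξ ^ 2 + Real.sqrt ((kp lam mu om) ^ 2 - ξ ^ 2) *
            Real.sqrt ((ks mu om) ^ 2 - ξ ^ 2))| /
          (ξ ^ 2 + Real.sqrt ((kp lam mu om) ^ 2 - ξ ^ 2) *
            Real.sqrt ((ks mu om) ^ 2 - ξ ^ 2)) ≤ C * om := by
  set s := √(lam + 2 * mu)
  have hs : 0 < s := Real.sqrt_pos.mpr (by linarith)
  have hA : 0 < (lam + 2 * mu) / √mu := by have := Real.sqrt_pos.mpr hmu; positivity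
  have hB : 0 < mu / s := by positivity
  refine ⟨s + (lam + 2 * mu) / √mu + mu / s, by positivity, fun om hom ξ hξ => ?_⟩
  have ha := kp_pos hlam hmu hom
  have hab := kp_le_ks hlam hmu hom
  have hξ2 : ξ ^ 2 ≤ kp lam mu om ^ 2 := sq_le_sq' (abs_le.mp hξ).1 (abs_le.mp hξ).2
  have hρ := le_add_sqrt_sub_mul_sqrt_sub hξ2 (pow_le_pow_left₀ ha.le hab 2)
  refine ⟨?_, ?_, ?_⟩
  · calc _ ≤ om ^ 2 * kp lam mu om / kp lam mu om ^ 2 :=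
          div_le_div₀ (by positivity) (by gcongr; exact sqrt_sq_sub_sq_le ha.le) (by positivity) hρ
      _ = s * om := by rw [pow_two (kp lam mu om), mul_div_mul_right _ _ ha.ne', sq_div_kp]
      _ ≤ _ := by gcongr; linarith
  · calc _ ≤ om ^ 2 * ks mu om / kp lam mu om ^ 2 :=
          div_le_div₀ (mul_nonneg (sq_nonneg om) (ha.le.trans hab))
            (by gcongr; exact sqrt_sq_sub_sq_le (ha.le.trans hab)) (by positivity) hρ
      _ = (lam + 2 * mu) / √mu * om := sq_mul_ks_div_kp_sq hlam hmu hom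
      _ ≤ _ := by gcongr; linarith
  · calc _ ≤ om ^ 2 / kp lam mu om + mu * kp lam mu om :=
          abs_mul_sub_mul_mul_div_le ha hξ (sq_nonneg om) hmu.le hρ
      _ = (s + mu / s) * om := by rw [sq_div_kp, mul_kp]; ring
      _ ≤ _ := by gcongr; linarith
end

section
/- Let λ, μ > 0, ω > 0, k_p = ω/√(λ+2μ), k_s = ω/√μ. For k_p < |ξ| ≤ k_s, with γ_p = i√(ξ² − k_p²) purely imaginary, γ_s = √(k_s² − ξ²) real, and ρ = ξ² + γ_p γ_s, one has k_p² < |ρ| ≤ k_s². -/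
open Complex

section
variable {P S x : ℝ}

theorem norm_ofReal_add_I_mul_sqrt_sq (hP : P ≤ x) (hS : x ≤ S) :
    ‖(x : ℂ) + I * (√(x - P) : ℂ) * (√(S - x) : ℂ)‖ ^ 2 = x ^ 2 + (x - P) * (S - x) := by
  have hrect : (x : ℂ) + I * (√(x - P) : ℂ) * (√(S - x) : ℂ)
      = x + ((√(x - P) * √(S - x) : ℝ) : ℂ) * I := by
    push_cast; ring
  rw [hrect, norm_add_mul_I, Real.sq_sqrt (by positivity), mul_pow,
    Real.sq_sqrt (sub_nonneg.2 hP), Real.sq_sqrt (sub_nonneg.2 hS)]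

theorem lt_norm_ofReal_add_I_mul_sqrt (hP0 : 0 ≤ P) (hP : P < x) (hS : x ≤ S) :
    P < ‖(x : ℂ) + I * (√(x - P) : ℂ) * (√(S - x) : ℂ)‖ := by
  refine lt_of_pow_lt_pow_left₀ 2 (norm_nonneg _) ?_
  rw [norm_ofReal_add_I_mul_sqrt_sq hP.le hS]
  nlinarith [mul_pos (sub_pos.2 hP) (show 0 < S + P by linarith)]

theorem norm_ofReal_add_I_mul_sqrt_le (hP0 : 0 ≤ P) (hP : P ≤ x) (hS : x ≤ S) :
    ‖(x : ℂ) + I * (√(x - P) : ℂ) * (√(S - x) : ℂ)‖ ≤ S := by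
  refine le_of_pow_le_pow_left₀ two_ne_zero (by linarith) ?_
  rw [norm_ofReal_add_I_mul_sqrt_sq hP hS]
  nlinarith [mul_nonneg (sub_nonneg.2 hS) (show 0 ≤ S + P by linarith)]

end

theorem stmt2_general (lam mu om ξ : ℝ) (hom : 0 < om)
    (hlo : kp lam mu om < |ξ|) (hhi : |ξ| ≤ ks mu om) :
    (kp lam mu om) ^ 2 <
        ‖((ξ ^ 2 : ℂ) +
          (Complex.I * (Real.sqrt (ξ ^ 2 - (kp lam mu om) ^ 2) : ℝ)) *
            ((Real.sqrt ((ks mu om) ^ 2 - ξ ^ 2) : ℝ) : ℂ))‖ ∧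
      ‖((ξ ^ 2 : ℂ) +
          (Complex.I * (Real.sqrt (ξ ^ 2 - (kp lam mu om) ^ 2) : ℝ)) *
            ((Real.sqrt ((ks mu om) ^ 2 - ξ ^ 2) : ℝ) : ℂ))‖ ≤ (ks mu om) ^ 2 := by
  have hkp : 0 ≤ kp lam mu om := div_nonneg hom.le (Real.sqrt_nonneg _)
  have hlo' : kp lam mu om ^ 2 < ξ ^ 2 := by
    rw [sq_lt_sq, abs_of_nonneg hkp]; exact hlo
  have hhi' : ξ ^ 2 ≤ ks mu om ^ 2 := sq_le_sq.2 (hhi.trans (le_abs_self _))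
  rw [← ofReal_pow]
  exact ⟨lt_norm_ofReal_add_I_mul_sqrt (sq_nonneg _) hlo' hhi',
    norm_ofReal_add_I_mul_sqrt_le (sq_nonneg _) hlo'.le hhi'⟩

/-- For `k_p < |ξ| ≤ k_s`, with `γ_p = i√(ξ² − k_p²)` purely imaginary,
`γ_s = √(k_s² − ξ²)` real, and `ρ = ξ² + γ_p γ_s`, one has `k_p² < |ρ| ≤ k_s²`. -/
theorem stmt2 (lam mu om ξ : ℝ) (hlam : 0 < lam) (hmu : 0 < mu) (hom : 0 < om)
    (hlo : kp lam mu om < |ξ|) (hhi : |ξ| ≤ ks mu om) :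
    (kp lam mu om) ^ 2 <
        ‖((ξ ^ 2 : ℂ) +
          (Complex.I * (Real.sqrt (ξ ^ 2 - (kp lam mu om) ^ 2) : ℝ)) *
            ((Real.sqrt ((ks mu om) ^ 2 - ξ ^ 2) : ℝ) : ℂ))‖ ∧
      ‖((ξ ^ 2 : ℂ) +
          (Complex.I * (Real.sqrt (ξ ^ 2 - (kp lam mu om) ^ 2) : ℝ)) *
            ((Real.sqrt ((ks mu om) ^ 2 - ξ ^ 2) : ℝ) : ℂ))‖ ≤ (ks mu om) ^ 2 :=
  stmt2_general lam mu om ξ hom hlo hhi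
end
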